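/- Suppose A = C ∘ A_1 and B = C ∘ B_1 for finite Blaschke products A_1, B_1, C with deg(C) > 1, let ζ ∈ 𝔻 be a regular value of both A and B (of common degree d), and label the fibers A^{-1}(ζ) = {a_1, …, a_d}, B^{-1}(ζ) = {b_1, …, b_d} so that A_1(a_i) = B_1(b_i) ∈ C^{-1}(ζ) for every i. Define the equivalence relation ∼₁ on {1, …, d} by i ∼₁ j if and only if A_1(a_i) = A_1(a_j). Then ∼₁ is a non-trivial equivalence relation, γ_A*(i) ∼₁ γ_B*(i) for every admissible loop γ and every index i, and the equivalence relation ∼ is contained in ∼₁; in particular ∼ is non-trivial for this labeling. -/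

import Mathlib

/-!
Pushing a lift of `γ` under `A = C ∘ A₁` forward by `A₁` gives a lift of `γ` under `C`, and
likewise for `B = C ∘ B₁`. Every critical value of `C` is one of `A` (as `A₁` is onto the disk),
so `γ` avoids the critical values of `C`, where `C` is locally injective; two lifts under `C`
starting at `A₁ (a i) = B₁ (b i)` therefore end at the same point. This gives
`γ_A*(i) ∼₁ γ_B*(i)`, hence `∼ ⊆ ∼₁`. Finally `ζ` is a regular value of `C` of degree `≥ 2`, so
it has two distinct `C`-preimages in the disk; both are values of `A₁` on the fiber `A⁻¹(ζ)`,
so `∼₁`, and with it `∼`, is non-trivial.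
-/

open Complex Metric Set

/-- `B` is a finite Blaschke product of degree `d ≥ 1`: on the closed unit disk it is
given by `B z = λ · ∏ i (z - a i)/(1 - conj (a i) · z)` with `|λ| = 1` and all
`a i` in the open unit disk. -/
def IsBlaschke (d : ℕ) (B : ℂ → ℂ) : Prop :=
  1 ≤ d ∧ ∃ (l : ℂ) (a : Fin d → ℂ), ‖l‖ = 1 ∧ (∀ i, ‖a i‖ < 1) ∧
    ∀ z : ℂ, ‖z‖ ≤ 1 →
      B z = l * ∏ i, (z - a i) / (1 - (starRingEnd ℂ) (a i) * z)

/-- The set of critical values of `B` in the unit disk. -/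
def critVals (B : ℂ → ℂ) : Set ℂ :=
  B '' {z | z ∈ Metric.ball (0:ℂ) 1 ∧ deriv B z = 0}

/-- `γ : [0,1] → 𝔻` is a loop based at `ζ` avoiding the set `S`. -/
def IsAdmLoop (S : Set ℂ) (ζ : ℂ) (γ : ℝ → ℂ) : Prop :=
  ContinuousOn γ (Set.Icc 0 1) ∧ γ 0 = ζ ∧ γ 1 = ζ ∧
    ∀ t ∈ Set.Icc (0:ℝ) 1, γ t ∈ Metric.ball (0:ℂ) 1 ∧ γ t ∉ S

/-- The lift of the loop `γ` under `B` (within the unit disk) starting at `b i`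
terminates at `b j`; for an admissible loop this says `γ_B*(i) = j`. -/
def LiftEnds {d : ℕ} (B : ℂ → ℂ) (b : Fin d → ℂ) (γ : ℝ → ℂ) (i j : Fin d) : Prop :=
  ∃ γ' : ℝ → ℂ, ContinuousOn γ' (Set.Icc 0 1) ∧
    (∀ t ∈ Set.Icc (0:ℝ) 1, γ' t ∈ Metric.ball (0:ℂ) 1 ∧ B (γ' t) = γ t) ∧
    γ' 0 = b i ∧ γ' 1 = b j

/-- `b : Fin d → ℂ` is a labeling of the fiber `B⁻¹(ζ)` in the unit disk. -/
def IsFiberLabeling {d : ℕ} (B : ℂ → ℂ) (ζ : ℂ) (b : Fin d → ℂ) : Prop :=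
  Function.Injective b ∧ (∀ i, b i ∈ Metric.ball (0:ℂ) 1) ∧
    ∀ z ∈ Metric.ball (0:ℂ) 1, (B z = ζ ↔ ∃ i, z = b i)

/-- The partition `Par` of `Fin d` is respected by the monodromy group of `B`
based at `ζ` (with fiber labeling `b`): every monodromy permutation maps each
block into a single block. -/
def RespectsPartition {d : ℕ} (B : ℂ → ℂ) (ζ : ℂ) (b : Fin d → ℂ)
    (Par : Set (Set (Fin d))) : Prop :=
  ∀ γ : ℝ → ℂ, IsAdmLoop (critVals B) ζ γ →
    ∀ Q ∈ Par, ∃ Q' ∈ Par, ∀ i ∈ Q, ∀ j, LiftEnds B b γ i j → j ∈ Q'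

/-- The symmetric relation `≃` of Definition 1.8: `j ≃ k` iff there is a loop `γ`
in `𝔻` based at `ζ` avoiding the critical values of `A` and `B`, and an index `i`,
with `γ_B*(i) = j` and `γ_A*(i) = k` (or vice versa). -/
def monSimeq {d : ℕ} (A B : ℂ → ℂ) (ζ : ℂ) (a b : Fin d → ℂ) (j k : Fin d) : Prop :=
  ∃ γ : ℝ → ℂ, IsAdmLoop (critVals A ∪ critVals B) ζ γ ∧
    ∃ i, (LiftEnds B b γ i j ∧ LiftEnds A a γ i k) ∨
         (LiftEnds B b γ i k ∧ LiftEnds A a γ i j)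

/-- The equivalence relation `∼` generated by `≃`. -/
def monSim {d : ℕ} (A B : ℂ → ℂ) (ζ : ℂ) (a b : Fin d → ℂ) (j k : Fin d) : Prop :=
  Relation.EqvGen (monSimeq A B ζ a b) j k

open Polynomial ComplexConjugate Filter Topology

lemma normSq_one_sub_conj_mul_sub_normSq_sub (a z : ℂ) :
    normSq (1 - conj a * z) - normSq (z - a) = (1 - normSq a) * (1 - normSq z) := by
  simp only [normSq_apply, mul_re, mul_im, conj_re, conj_im, sub_re, sub_im, one_re, one_im]
  ring

lemma norm_sub_lt_norm_one_sub_conj_mul_iff {a z : ℂ} (ha : ‖a‖ < 1) :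
    ‖z - a‖ < ‖1 - conj a * z‖ ↔ ‖z‖ < 1 := by
  have ha' : 0 < 1 - normSq a := by
    rw [sub_pos, ← Complex.sq_norm]; exact pow_lt_one₀ (norm_nonneg a) ha two_ne_zero
  rw [← sq_lt_sq₀ (norm_nonneg _) (norm_nonneg _), ← sq_lt_one_iff₀ (norm_nonneg z),
    Complex.sq_norm, Complex.sq_norm, Complex.sq_norm, ← sub_pos,
    normSq_one_sub_conj_mul_sub_normSq_sub, mul_pos_iff_of_pos_left ha', sub_pos]

lemma one_sub_conj_mul_ne_zero {a z : ℂ} (ha : ‖a‖ < 1) (hz : ‖z‖ ≤ 1) :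
    1 - conj a * z ≠ 0 := by
  refine sub_ne_zero.2 fun h => ?_
  have : ‖conj a * z‖ < 1 := by
    rw [norm_mul, RCLike.norm_conj]
    exact lt_of_le_of_lt (mul_le_of_le_one_right (norm_nonneg a) hz) ha
  simp [← h] at this

theorem Polynomial.exists_ne_isRoot_of_not_isRoot_derivative {K : Type*} [Field K]
    [IsAlgClosed K] {p : K[X]} (hp : 2 ≤ p.natDegree)
    (hsimple : ∀ z, p.IsRoot z → ¬ p.derivative.IsRoot z) :
    ∃ z₁ z₂, z₁ ≠ z₂ ∧ p.IsRoot z₁ ∧ p.IsRoot z₂ := by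
  classical
  have hp0 : p ≠ 0 := ne_zero_of_natDegree_gt hp
  have hnodup : p.roots.Nodup := Multiset.nodup_iff_count_le_one.2 fun z => by
    rw [count_roots]
    refine not_lt.1 fun h => ?_
    obtain ⟨hroot, hroot'⟩ := (one_lt_rootMultiplicity_iff_isRoot hp0).1 h
    exact hsimple z hroot hroot'
  have hcard : 1 < p.roots.toFinset.card := by
    rw [Multiset.toFinset_card_of_nodup hnodup, splits_iff_card_roots.1 (IsAlgClosed.splits p)]
    omega
  obtain ⟨z₁, h₁, z₂, h₂, hne⟩ := Finset.one_lt_card.1 hcard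
  simp only [Multiset.mem_toFinset, mem_roots hp0] at h₁ h₂
  exact ⟨z₁, z₂, hne, h₁, h₂⟩

theorem deriv_eq_zero_of_eventuallyEq_add_div {𝕜 : Type*} [NontriviallyNormedField 𝕜]
    {f : 𝕜 → 𝕜} {P D : 𝕜[X]} {w z : 𝕜} (hf : f =ᶠ[𝓝 z] fun x => w + P.eval x / D.eval x)
    (hD : D.eval z ≠ 0) (hP : P.IsRoot z) (hP' : P.derivative.IsRoot z) : deriv f z = 0 := by
  have h := ((P.hasDerivAt z).div (D.hasDerivAt z) hD).const_add w
  rw [hP.eq_zero, hP'.eq_zero, zero_mul, zero_mul, sub_zero, zero_div] at h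
  exact (h.congr_of_eventuallyEq hf).deriv

theorem HasStrictDerivAt.exists_mem_nhds_injOn {𝕜 : Type*} [NontriviallyNormedField 𝕜]
    [CompleteSpace 𝕜] {f : 𝕜 → 𝕜} {f' a : 𝕜} (hf : HasStrictDerivAt f f' a) (hf' : f' ≠ 0) :
    ∃ U ∈ 𝓝 a, InjOn f U :=
  let φ := (hf.hasStrictFDerivAt_equiv hf').toOpenPartialHomeomorph f
  ⟨φ.source, φ.open_source.mem_nhds (HasStrictFDerivAt.mem_toOpenPartialHomeomorph_source _),
    φ.injOn⟩

/-- A variant of `IsSeparatedMap.eqOn_of_comp_eqOn` needing local injectivity of `f` only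
along `g₁`. -/
theorem eqOn_of_comp_eqOn_of_injOn_nhds {S X Y : Type*} [TopologicalSpace S]
    [TopologicalSpace X] [T2Space X] {f : X → Y} {s : Set S} {g₁ g₂ : S → X}
    (hs : IsPreconnected s) (h₁ : ContinuousOn g₁ s) (h₂ : ContinuousOn g₂ s)
    (he : EqOn (f ∘ g₁) (f ∘ g₂) s) (hinj : ∀ x ∈ s, ∃ U ∈ 𝓝 (g₁ x), InjOn f U)
    {x₀ : S} (hx₀ : x₀ ∈ s) (h₀ : g₁ x₀ = g₂ x₀) : EqOn g₁ g₂ s := by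
  rw [isPreconnected_iff_preconnectedSpace] at hs
  rw [continuousOn_iff_continuous_domRestrict] at h₁ h₂
  have hopen : IsOpen {x : s | g₁ x = g₂ x} :=
    isOpen_iff_mem_nhds.2 fun x (hx : g₁ x = g₂ x) => by
      obtain ⟨U, hU, hfU⟩ := hinj x x.2
      filter_upwards [h₁.continuousAt.preimage_mem_nhds hU,
        h₂.continuousAt.preimage_mem_nhds (hx ▸ hU)] with y hy₁ hy₂
      exact hfU hy₁ hy₂ (he y.2)
  have hclopen := IsClopen.eq_univ ⟨isClosed_eq h₁ h₂, hopen⟩ ⟨⟨x₀, hx₀⟩, h₀⟩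
  exact fun x hx => (eq_univ_iff_forall.1 hclopen ⟨x, hx⟩ : g₁ x = g₂ x)

section BlaschkePolynomial

variable {e : ℕ} (l : ℂ) (c : Fin e → ℂ) (w : ℂ)

noncomputable def blaschkeDen : ℂ[X] := ∏ i, (1 - Polynomial.C (conj (c i)) * X)

/-- The numerator of `B - w` for the Blaschke product `B` with zeros `c` and rotation `l`;
its roots are the preimages of `w`. -/
noncomputable def blaschkeFiberPoly : ℂ[X] :=
  Polynomial.C l * ∏ i, (X - Polynomial.C (c i)) - Polynomial.C w * blaschkeDen c

variable {l c w}

lemma eval_blaschkeDen_ne_zero (hc : ∀ i, ‖c i‖ < 1) {z : ℂ} (hz : ‖z‖ ≤ 1) :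
    (blaschkeDen c).eval z ≠ 0 := by
  simpa [blaschkeDen, eval_prod, Finset.prod_ne_zero_iff] using
    fun i => one_sub_conj_mul_ne_zero (hc i) hz

lemma blaschke_prod_sub_eq_div (hc : ∀ i, ‖c i‖ < 1) {z : ℂ} (hz : ‖z‖ ≤ 1) :
    l * ∏ i, (z - c i) / (1 - conj (c i) * z) - w =
      (blaschkeFiberPoly l c w).eval z / (blaschkeDen c).eval z := by
  have hD := eval_blaschkeDen_ne_zero hc hz
  rw [eq_div_iff hD, Finset.prod_div_distrib]
  simp only [blaschkeFiberPoly, blaschkeDen, eval_prod, eval_sub, eval_mul, eval_C, eval_X,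
    eval_one] at hD ⊢
  rw [sub_mul, mul_assoc, div_mul_cancel₀ _ hD]

lemma coeff_blaschkeFiberPoly :
    (blaschkeFiberPoly l c w).coeff e = l - w * ∏ i, -conj (c i) := by
  have hdeg {p : Fin e → ℂ[X]} (hp : ∀ i, (p i).natDegree ≤ 1) :
      (∏ i, p i).coeff e = ∏ i, (p i).coeff 1 := by
    simpa using coeff_prod_of_natDegree_le Finset.univ p 1 fun i _ => hp i
  rw [blaschkeFiberPoly, coeff_sub, coeff_C_mul, coeff_C_mul, blaschkeDen,
    hdeg fun i => natDegree_X_sub_C_le _, hdeg fun i => by compute_degree]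
  simp [coeff_one, coeff_X]

lemma le_natDegree_blaschkeFiberPoly (hl : ‖l‖ = 1) (hc : ∀ i, ‖c i‖ < 1) (hw : ‖w‖ < 1) :
    e ≤ (blaschkeFiberPoly l c w).natDegree := by
  refine le_natDegree_of_ne_zero fun h => ?_
  rw [coeff_blaschkeFiberPoly, sub_eq_zero] at h
  have : ‖w * ∏ i, -conj (c i)‖ < 1 := by
    rw [norm_mul, norm_prod]
    refine mul_lt_one_of_nonneg_of_lt_one_left (norm_nonneg w) hw ?_
    exact Finset.prod_le_one (fun i _ => norm_nonneg _) fun i _ => by simpa using (hc i).le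
  rw [← h, hl] at this
  exact lt_irrefl _ this

lemma norm_lt_one_of_isRoot_blaschkeFiberPoly (hl : ‖l‖ = 1) (hc : ∀ i, ‖c i‖ < 1)
    (hw : ‖w‖ < 1) {z : ℂ} (hz : (blaschkeFiberPoly l c w).IsRoot z) : ‖z‖ < 1 := by
  by_contra! hz1
  have hroot : l * ∏ i, (z - c i) = w * ∏ i, (1 - conj (c i) * z) := by
    simpa [blaschkeFiberPoly, blaschkeDen, eval_prod, sub_eq_zero] using hz
  have hpos : 0 < ∏ i, ‖z - c i‖ :=
    Finset.prod_pos fun i _ => norm_pos_iff.2 <| sub_ne_zero.2 fun h => by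
      have := hc i; rw [← h] at this; linarith
  have hle : ∏ i, ‖1 - conj (c i) * z‖ ≤ ∏ i, ‖z - c i‖ :=
    Finset.prod_le_prod (fun i _ => norm_nonneg _) fun i _ =>
      not_lt.1 fun h => (norm_sub_lt_norm_one_sub_conj_mul_iff (hc i)).1 h |>.not_ge hz1
  have hnorm := congrArg norm hroot
  rw [norm_mul, norm_mul, hl, one_mul, norm_prod, norm_prod] at hnorm
  nlinarith [norm_nonneg w]

lemma norm_blaschke_prod_lt_one (hl : ‖l‖ = 1) (hc : ∀ i, ‖c i‖ < 1) (he : 1 ≤ e)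
    {z : ℂ} (hz : ‖z‖ < 1) : ‖l * ∏ i, (z - c i) / (1 - conj (c i) * z)‖ < 1 := by
  have hf : ∀ i, ‖(z - c i) / (1 - conj (c i) * z)‖ < 1 := fun i => by
    rw [norm_div, div_lt_one (norm_pos_iff.2 (one_sub_conj_mul_ne_zero (hc i) hz.le))]
    exact (norm_sub_lt_norm_one_sub_conj_mul_iff (hc i)).2 hz
  let i₀ : Fin e := ⟨0, he⟩
  rw [norm_mul, hl, one_mul, norm_prod, ← Finset.mul_prod_erase _ _ (Finset.mem_univ i₀)]
  exact mul_lt_one_of_nonneg_of_lt_one_left (norm_nonneg _) (hf i₀)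
    (Finset.prod_le_one (fun i _ => norm_nonneg _) fun i _ => (hf i).le)

end BlaschkePolynomial

section IsBlaschke

variable {e m : ℕ} {A A₁ B C : ℂ → ℂ} {w z : ℂ}

lemma IsBlaschke.exists_fiberPoly (hB : IsBlaschke e B) (hw : ‖w‖ < 1) :
    ∃ P D : ℂ[X], e ≤ P.natDegree ∧ (∀ z, P.IsRoot z → z ∈ ball (0 : ℂ) 1 ∧ B z = w) ∧
      ∀ z ∈ ball (0 : ℂ) 1, D.eval z ≠ 0 ∧ B z = w + P.eval z / D.eval z := by
  obtain ⟨-, l, c, hl, hc, hB⟩ := hB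
  have hPD : ∀ z ∈ ball (0 : ℂ) 1, (blaschkeDen c).eval z ≠ 0 ∧
      B z = w + (blaschkeFiberPoly l c w).eval z / (blaschkeDen c).eval z := fun z hz => by
    have hz : ‖z‖ ≤ 1 := (mem_ball_zero_iff.1 hz).le
    rw [hB z hz, ← blaschke_prod_sub_eq_div hc hz]
    exact ⟨eval_blaschkeDen_ne_zero hc hz, by ring⟩
  refine ⟨_, _, le_natDegree_blaschkeFiberPoly hl hc hw, fun z hP => ?_, hPD⟩
  have hz := mem_ball_zero_iff.2 (norm_lt_one_of_isRoot_blaschkeFiberPoly hl hc hw hP)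
  rw [(hPD z hz).2, hP.eq_zero, zero_div, add_zero]
  exact ⟨hz, rfl⟩

lemma IsBlaschke.differentiableOn (hB : IsBlaschke e B) :
    DifferentiableOn ℂ B (ball 0 1) := by
  obtain ⟨P, D, -, -, hPD⟩ := hB.exists_fiberPoly (w := 0) (by simp)
  refine DifferentiableOn.congr (fun z hz => ?_) fun z hz => (hPD z hz).2
  exact ((differentiableAt_const _).add
    (P.differentiableAt.div D.differentiableAt (hPD z hz).1)).differentiableWithinAt

lemma IsBlaschke.analyticAt (hB : IsBlaschke e B) (hz : z ∈ ball (0 : ℂ) 1) :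
    AnalyticAt ℂ B z :=
  hB.differentiableOn.analyticAt (isOpen_ball.mem_nhds hz)

lemma IsBlaschke.mapsTo_ball (hB : IsBlaschke e B) : MapsTo B (ball 0 1) (ball 0 1) := by
  obtain ⟨he, l, c, hl, hc, hB⟩ := hB
  intro z hz
  rw [mem_ball_zero_iff] at hz ⊢
  rw [hB z hz.le]
  exact norm_blaschke_prod_lt_one hl hc he hz

lemma IsBlaschke.surjOn_ball (hB : IsBlaschke e B) : SurjOn B (ball 0 1) (ball 0 1) := by
  intro w hw
  obtain ⟨P, D, hdeg, hroots, hPD⟩ := hB.exists_fiberPoly (mem_ball_zero_iff.1 hw)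
  obtain ⟨z, hz⟩ := Complex.exists_root (natDegree_pos_iff_degree_pos.1 (hB.1.trans hdeg))
  exact ⟨z, hroots z hz⟩

/-- A regular value of a Blaschke product of degree at least two has two distinct preimages:
otherwise its fiber polynomial would have a multiple root, which is a critical point. -/
lemma IsBlaschke.exists_ne_of_notMem_critVals (hB : IsBlaschke e B) (he : 2 ≤ e)
    (hw : w ∈ ball (0 : ℂ) 1) (hcrit : w ∉ critVals B) :
    ∃ z₁ ∈ ball (0 : ℂ) 1, ∃ z₂ ∈ ball (0 : ℂ) 1, z₁ ≠ z₂ ∧ B z₁ = w ∧ B z₂ = w := by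
  obtain ⟨P, D, hdeg, hroots, hPD⟩ := hB.exists_fiberPoly (mem_ball_zero_iff.1 hw)
  have hsimple (z : ℂ) (hP : P.IsRoot z) (hP' : P.derivative.IsRoot z) : False := by
    have hB' : B =ᶠ[𝓝 z] fun x => w + P.eval x / D.eval x :=
      eventually_of_mem (isOpen_ball.mem_nhds (hroots z hP).1) fun x hx => (hPD x hx).2
    exact hcrit ⟨z, ⟨(hroots z hP).1, deriv_eq_zero_of_eventuallyEq_add_div hB'
      (hPD z (hroots z hP).1).1 hP hP'⟩, (hroots z hP).2⟩
  obtain ⟨z₁, z₂, hne, h₁, h₂⟩ :=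
    exists_ne_isRoot_of_not_isRoot_derivative (he.trans hdeg) hsimple
  exact ⟨z₁, (hroots z₁ h₁).1, z₂, (hroots z₂ h₂).1, hne, (hroots z₁ h₁).2, (hroots z₂ h₂).2⟩

lemma critVals_subset_critVals_of_comp (hA₁ : IsBlaschke m A₁) (hC : IsBlaschke e C)
    (hcomp : ∀ z : ℂ, ‖z‖ ≤ 1 → A z = C (A₁ z)) : critVals C ⊆ critVals A := by
  rintro _ ⟨w, ⟨hw, hCw⟩, rfl⟩
  obtain ⟨z, hz, rfl⟩ := hA₁.surjOn_ball hw
  have hA : A =ᶠ[𝓝 z] C ∘ A₁ := eventually_of_mem (isOpen_ball.mem_nhds hz)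
    fun x hx => hcomp x (mem_ball_zero_iff.1 hx).le
  refine ⟨z, ⟨hz, ?_⟩, hcomp z (mem_ball_zero_iff.1 hz).le⟩
  rw [hA.deriv_eq, deriv_comp z (hC.analyticAt hw).differentiableAt
    (hA₁.analyticAt hz).differentiableAt, hCw, zero_mul]

end IsBlaschke

section Lifts

variable {d d' e m : ℕ} {A A₁ C : ℂ → ℂ} {γ : ℝ → ℂ}

lemma LiftEnds.outer_of_comp (hA₁ : IsBlaschke m A₁)
    (hcomp : ∀ z : ℂ, ‖z‖ ≤ 1 → A z = C (A₁ z))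
    {a : Fin d → ℂ} {i j : Fin d} (h : LiftEnds A a γ i j) : LiftEnds C (A₁ ∘ a) γ i j := by
  obtain ⟨α, hαc, hα, hα0, hα1⟩ := h
  refine ⟨A₁ ∘ α, hA₁.differentiableOn.continuousOn.comp hαc fun t ht => (hα t ht).1,
    fun t ht => ⟨hA₁.mapsTo_ball (hα t ht).1, ?_⟩, by simp [hα0], by simp [hα1]⟩
  rw [Function.comp_apply, ← hcomp _ (mem_ball_zero_iff.1 (hα t ht).1).le, (hα t ht).2]

lemma IsBlaschke.liftEnds_unique (hC : IsBlaschke e C)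
    (hγ : ∀ t ∈ Icc (0 : ℝ) 1, γ t ∉ critVals C) {u : Fin d → ℂ} {v : Fin d' → ℂ}
    {i j : Fin d} {i' k : Fin d'} (h₁ : LiftEnds C u γ i j) (h₂ : LiftEnds C v γ i' k)
    (h₀ : u i = v i') : u j = v k := by
  obtain ⟨δ₁, hδ₁c, hδ₁, hδ₁0, hδ₁1⟩ := h₁
  obtain ⟨δ₂, hδ₂c, hδ₂, hδ₂0, hδ₂1⟩ := h₂
  have hinj (t) (ht : t ∈ Icc (0 : ℝ) 1) : ∃ U ∈ 𝓝 (δ₁ t), InjOn C U := by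
    have hderiv : deriv C (δ₁ t) ≠ 0 := fun h =>
      hγ t ht ⟨δ₁ t, ⟨(hδ₁ t ht).1, h⟩, (hδ₁ t ht).2⟩
    exact ((hC.analyticAt (hδ₁ t ht).1).hasStrictDerivAt).exists_mem_nhds_injOn hderiv
  have h := eqOn_of_comp_eqOn_of_injOn_nhds isPreconnected_Icc hδ₁c hδ₂c
    (fun t ht => (hδ₁ t ht).2.trans (hδ₂ t ht).2.symm) hinj (left_mem_Icc.2 zero_le_one)
    (by rw [hδ₁0, hδ₂0, h₀]) (right_mem_Icc.2 zero_le_one)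
  rwa [← hδ₁1, ← hδ₂1]

end Lifts

lemma IsFiberLabeling.exists_apply_ne_of_comp {d e m : ℕ} {A A₁ C : ℂ → ℂ} {ζ : ℂ}
    {a : Fin d → ℂ}
    (hA₁ : IsBlaschke m A₁) (hC : IsBlaschke e C) (he : 2 ≤ e)
    (hcomp : ∀ z : ℂ, ‖z‖ ≤ 1 → A z = C (A₁ z)) (hζ : ζ ∈ ball (0 : ℂ) 1)
    (hζC : ζ ∉ critVals C) (ha : IsFiberLabeling A ζ a) : ∃ i j, A₁ (a i) ≠ A₁ (a j) := by
  have hlabel {w} (hw : w ∈ ball (0 : ℂ) 1) (hCw : C w = ζ) : ∃ i, A₁ (a i) = w := by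
    obtain ⟨z, hz, rfl⟩ := hA₁.surjOn_ball hw
    obtain ⟨i, rfl⟩ := (ha.2.2 z hz).1 (by rw [hcomp z (mem_ball_zero_iff.1 hz).le, hCw])
    exact ⟨i, rfl⟩
  obtain ⟨w₁, hw₁, w₂, hw₂, hne, hCw₁, hCw₂⟩ := hC.exists_ne_of_notMem_critVals he hζ hζC
  obtain ⟨i, rfl⟩ := hlabel hw₁ hCw₁
  obtain ⟨j, rfl⟩ := hlabel hw₂ hCw₂
  exact ⟨i, j, hne⟩

theorem nontrivial_relation_of_common_factorization_general
    (d m e : ℕ) (A B A₁ B₁ C : ℂ → ℂ)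
    (hA₁ : IsBlaschke m A₁) (hB₁ : IsBlaschke m B₁)
    (hC : IsBlaschke e C) (he : 1 < e)
    (hAcomp : ∀ z : ℂ, ‖z‖ ≤ 1 → A z = C (A₁ z))
    (hBcomp : ∀ z : ℂ, ‖z‖ ≤ 1 → B z = C (B₁ z))
    (ζ : ℂ) (hζ : ζ ∈ Metric.ball (0:ℂ) 1)
    (hreg : ζ ∉ critVals A ∪ critVals B)
    (a b : Fin d → ℂ) (ha : IsFiberLabeling A ζ a)
    (hmatch : ∀ i, A₁ (a i) = B₁ (b i) ∧ C (A₁ (a i)) = ζ) :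
    (∃ i j : Fin d, A₁ (a i) ≠ A₁ (a j)) ∧
    (∀ γ : ℝ → ℂ, IsAdmLoop (critVals A ∪ critVals B) ζ γ →
      ∀ i j k : Fin d, LiftEnds A a γ i j → LiftEnds B b γ i k →
        A₁ (a j) = A₁ (a k)) ∧
    (∀ j k : Fin d, monSim A B ζ a b j k → A₁ (a j) = A₁ (a k)) ∧
    (∃ j k : Fin d, ¬ monSim A B ζ a b j k) := by
  have hCA : critVals C ⊆ critVals A := critVals_subset_critVals_of_comp hA₁ hC hAcomp
  have hlift : ∀ γ : ℝ → ℂ, IsAdmLoop (critVals A ∪ critVals B) ζ γ →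
      ∀ i j k : Fin d, LiftEnds A a γ i j → LiftEnds B b γ i k → A₁ (a j) = A₁ (a k) := by
    intro γ hγ i j k hα hβ
    have hγC : ∀ t ∈ Icc (0 : ℝ) 1, γ t ∉ critVals C :=
      fun t ht h => (hγ.2.2.2 t ht).2 (Or.inl (hCA h))
    exact (hC.liftEnds_unique hγC (hα.outer_of_comp hA₁ hAcomp) (hβ.outer_of_comp hB₁ hBcomp)
      (hmatch i).1).trans (hmatch k).1.symm
  have hsim : ∀ j k : Fin d, monSim A B ζ a b j k → A₁ (a j) = A₁ (a k) := by
    refine fun j k h => ((eq_equivalence.comap (A₁ ∘ a)).eqvGen_iff).1 (h.mono ?_)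
    rintro j k ⟨γ, hγ, i, ⟨hβ, hα⟩ | ⟨hβ, hα⟩⟩
    exacts [(hlift γ hγ i k j hα hβ).symm, hlift γ hγ i j k hα hβ]
  obtain ⟨i, j, hij⟩ :=
    ha.exists_apply_ne_of_comp hA₁ hC he hAcomp hζ fun h => hreg (Or.inl (hCA h))
  exact ⟨⟨i, j, hij⟩, hlift, hsim, i, j, fun h => hij (hsim i j h)⟩

/-- suppose `A = C ∘ A₁`, `B = C ∘ B₁` with `deg C = e > 1`, `ζ ∈ 𝔻`
a common regular value of `A, B` (of degree `d`), and the fibers are labeled so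
that `A₁ (a i) = B₁ (b i) ∈ C⁻¹(ζ)` for every `i`.  Define `i ∼₁ j ↔ A₁ (a i) = A₁ (a j)`.
Then `∼₁` is non-trivial, `γ_A*(i) ∼₁ γ_B*(i)` for every admissible loop `γ` and
index `i`, the relation `∼` is contained in `∼₁`, and in particular `∼` is
non-trivial for this labeling. -/
theorem nontrivial_relation_of_common_factorization
    (d m e : ℕ) (hd : 0 < d) (A B A₁ B₁ C : ℂ → ℂ)
    (hA : IsBlaschke d A) (hB : IsBlaschke d B)
    (hA₁ : IsBlaschke m A₁) (hB₁ : IsBlaschke m B₁)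
    (hC : IsBlaschke e C) (he : 1 < e)
    (hAcomp : ∀ z : ℂ, ‖z‖ ≤ 1 → A z = C (A₁ z))
    (hBcomp : ∀ z : ℂ, ‖z‖ ≤ 1 → B z = C (B₁ z))
    (ζ : ℂ) (hζ : ζ ∈ Metric.ball (0:ℂ) 1)
    (hreg : ζ ∉ critVals A ∪ critVals B)
    (a b : Fin d → ℂ) (ha : IsFiberLabeling A ζ a) (hb : IsFiberLabeling B ζ b)
    (hmatch : ∀ i, A₁ (a i) = B₁ (b i) ∧ C (A₁ (a i)) = ζ) :
    (∃ i j : Fin d, A₁ (a i) ≠ A₁ (a j)) ∧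
    (∀ γ : ℝ → ℂ, IsAdmLoop (critVals A ∪ critVals B) ζ γ →
      ∀ i j k : Fin d, LiftEnds A a γ i j → LiftEnds B b γ i k →
        A₁ (a j) = A₁ (a k)) ∧
    (∀ j k : Fin d, monSim A B ζ a b j k → A₁ (a j) = A₁ (a k)) ∧
    (∃ j k : Fin d, ¬ monSim A B ζ a b j k) :=
  nontrivial_relation_of_common_factorization_general d m e A B A₁ B₁ C hA₁ hB₁ hC he hAcomp hBcomp
    ζ hζ hreg a b ha hmatch
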